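/- Let A ∈ ℝ^{n×n}, B ∈ ℝ^{n×k}, C ∈ ℝ^{m×n}, F ∈ ℝ^{k×n}, and suppose 𝒱* ⊆ ℝ^n is the greatest element, with respect to inclusion, of the family { V : V ⊆ Ker C and there exists K ∈ ℝ^{k×n} with (A+BK)V ⊆ V }. If dim Ker Ω(C,F) = dim 𝒱*, then Ker Ω(C,F) = 𝒱* and F is a friend of 𝒱*, i.e., (A+BF)𝒱* ⊆ 𝒱*. -/

import Mathlib

open Matrix

/-- `Ker C = { x : Cx = 0 }` as a subspace of `ℝ^n`. -/
noncomputable def kerMat {m n : ℕ} (C : Matrix (Fin m) (Fin n) ℝ) :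
    Submodule ℝ (Fin n → ℝ) :=
  LinearMap.ker C.mulVecLin

/-- `Im B = { Bu : u ∈ ℝ^k }` as a subspace of `ℝ^n`. -/
noncomputable def imMat {n k : ℕ} (B : Matrix (Fin n) (Fin k) ℝ) :
    Submodule ℝ (Fin n → ℝ) :=
  LinearMap.range B.mulVecLin

/-- The unobservable subspace `Ker Ω(C,F)`: the kernel of the observability matrix
obtained by stacking `C, C(A+BF), …, C(A+BF)^{n-1}`. -/
noncomputable def unobs {n k m : ℕ} (A : Matrix (Fin n) (Fin n) ℝ)
    (B : Matrix (Fin n) (Fin k) ℝ) (C : Matrix (Fin m) (Fin n) ℝ)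
    (F : Matrix (Fin k) (Fin n) ℝ) : Submodule ℝ (Fin n → ℝ) :=
  ⨅ j ∈ Finset.range n, LinearMap.ker (C * (A + B * F) ^ j).mulVecLin

open Polynomial

/-- Cayley–Hamilton reduces `aeval M p` to a combination of `M ^ j` with `j < card ι`. -/
theorem Matrix.mulVec_aeval_mulVec_eq_zero {ι κ R : Type*} [CommRing R] [Nontrivial R]
    [Fintype ι] [DecidableEq ι] {M : Matrix ι ι R} {C : Matrix κ ι R} {x : ι → R}
    (hx : ∀ j < Fintype.card ι, C *ᵥ (M ^ j *ᵥ x) = 0) (p : R[X]) :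
    C *ᵥ (aeval M p *ᵥ x) = 0 := by
  have hdeg : (p %ₘ M.charpoly).degree < Fintype.card ι :=
    M.charpoly_degree_eq_dim ▸ degree_modByMonic_lt p M.charpoly_monic
  rw [aeval_eq_aeval_mod_charpoly, aeval_eq_sum_range, sum_mulVec, mulVec_sum]
  refine Finset.sum_eq_zero fun i _ => ?_
  rw [smul_mulVec, mulVec_smul]
  rcases lt_or_ge i (Fintype.card ι) with hi | hi
  · rw [hx i hi, smul_zero]
  · rw [coeff_eq_zero_of_degree_lt (hdeg.trans_le (by exact_mod_cast hi)), zero_smul]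

theorem Matrix.mulVec_pow_mulVec_eq_zero {ι κ R : Type*} [CommRing R] [Nontrivial R]
    [Fintype ι] [DecidableEq ι] {M : Matrix ι ι R} {C : Matrix κ ι R} {x : ι → R}
    (hx : ∀ j < Fintype.card ι, C *ᵥ (M ^ j *ᵥ x) = 0) (j : ℕ) :
    C *ᵥ (M ^ j *ᵥ x) = 0 := by
  simpa using mulVec_aeval_mulVec_eq_zero hx (X ^ j)

section Unobservable

variable {n k m : ℕ} {A : Matrix (Fin n) (Fin n) ℝ} {B : Matrix (Fin n) (Fin k) ℝ}
  {C : Matrix (Fin m) (Fin n) ℝ} {F : Matrix (Fin k) (Fin n) ℝ}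

theorem mem_unobs_iff {x : Fin n → ℝ} :
    x ∈ unobs A B C F ↔ ∀ j, C *ᵥ ((A + B * F) ^ j *ᵥ x) = 0 := by
  simp only [unobs, Submodule.mem_iInf, Finset.mem_range, LinearMap.mem_ker, mulVecLin_apply,
    ← mulVec_mulVec]
  exact ⟨fun h => mulVec_pow_mulVec_eq_zero (by simpa using h), fun h j _ => h j⟩

theorem unobs_le_kerMat : unobs A B C F ≤ kerMat C := fun x hx => by
  simpa [kerMat] using mem_unobs_iff.mp hx 0

theorem map_unobs_le_unobs :
    Submodule.map (A + B * F).mulVecLin (unobs A B C F) ≤ unobs A B C F := by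
  rintro _ ⟨x, hx, rfl⟩
  refine mem_unobs_iff.mpr fun j => ?_
  simpa only [mulVecLin_apply, mulVec_mulVec, Matrix.mul_assoc, pow_succ] using
    mem_unobs_iff.mp hx (j + 1)

end Unobservable

/-- If `𝒱*` is the greatest (A,B)-invariant subspace contained in
`Ker C` and `dim Ker Ω(C,F) = dim 𝒱*`, then `Ker Ω(C,F) = 𝒱*` and `F` is a friend of
`𝒱*`, i.e. `(A+BF)𝒱* ⊆ 𝒱*`. -/
theorem stmt15 (n k m : ℕ) (A : Matrix (Fin n) (Fin n) ℝ)
    (B : Matrix (Fin n) (Fin k) ℝ) (C : Matrix (Fin m) (Fin n) ℝ)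
    (F : Matrix (Fin k) (Fin n) ℝ)
    (Vstar : Submodule ℝ (Fin n → ℝ))
    (hVstar : IsGreatest {V : Submodule ℝ (Fin n → ℝ) | V ≤ kerMat C ∧
      ∃ K : Matrix (Fin k) (Fin n) ℝ, Submodule.map (A + B * K).mulVecLin V ≤ V} Vstar)
    (hdim : Module.finrank ℝ (unobs A B C F) = Module.finrank ℝ Vstar) :
    unobs A B C F = Vstar ∧
      Submodule.map (A + B * F).mulVecLin Vstar ≤ Vstar := by
  have hle : unobs A B C F ≤ Vstar := hVstar.2 ⟨unobs_le_kerMat, F, map_unobs_le_unobs⟩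
  have heq : unobs A B C F = Vstar := Submodule.eq_of_le_of_finrank_eq hle hdim
  exact ⟨heq, heq ▸ map_unobs_le_unobs⟩
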